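/- arXiv:math-ph/0505075 — 4 statements merged into one kernel-verified Lean document; each statement's English description precedes it below -/
import Mathlib

section
/- For every real number r and every β with 0 < β ≤ 1, we have 1/√(r² + β²) = ∫_{-∞}^{∞} e^{isr} (∫_0^∞ (1/π) (1/√(1+x²)) e^{-β|s|√(1+x²)} dx) ds. -/
open MeasureTheory Set Real Filter

lemma aux_integrableOn_cexp (c : ℂ) (hc : c.re < 0) :
    IntegrableOn (fun s : ℝ => Complex.exp (c * s)) (Set.Ioi 0) := by
  apply (exp_neg_integrableOn_Ioi 0 (by linarith : (0:ℝ) < -c.re)).mono'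
  · exact (Complex.continuous_exp.comp (by fun_prop)).aestronglyMeasurable
  · filter_upwards with s
    simp [Complex.norm_exp, Complex.mul_re, neg_mul]

lemma aux_integral_cexp (c : ℂ) (hc : c.re < 0) :
    ∫ s : ℝ in Set.Ioi 0, Complex.exp (c * s) = -c⁻¹ := by
  have hc0 : c ≠ 0 := fun h => by simp [h] at hc
  have hderiv : ∀ x ∈ Ici (0:ℝ),
      HasDerivAt (fun s : ℝ => c⁻¹ * Complex.exp (c * s)) (Complex.exp (c * x)) x := by
    intro x _
    have h1 : HasDerivAt (fun s : ℝ => c * (s:ℂ)) c x := by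
      simpa using (Complex.ofRealCLM.hasDerivAt.const_mul c)
    have := ((Complex.hasDerivAt_exp (c * x)).comp x h1).const_mul c⁻¹
    have h2 : c⁻¹ * (Complex.exp (c * x) * c) = Complex.exp (c * x) := by
      field_simp
    rw [h2] at this
    exact this
  have htend : Tendsto (fun s : ℝ => c⁻¹ * Complex.exp (c * s)) atTop (nhds 0) := by
    rw [tendsto_zero_iff_norm_tendsto_zero]
    have : Tendsto (fun s : ℝ => ‖c⁻¹‖ * Real.exp (-(-c.re) * s)) atTop (nhds (‖c⁻¹‖ * 0)) := by
      apply Tendsto.const_mul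
      exact Real.tendsto_exp_atBot.comp (tendsto_id.const_mul_atTop_of_neg (by linarith))
    simpa [norm_mul, Complex.norm_exp, Complex.mul_re, neg_mul] using this
  have := integral_Ioi_of_hasDerivAt_of_tendsto' hderiv (aux_integrableOn_cexp c hc) htend
  simpa using this

lemma aux_integrableOn_cexp_Iic (c : ℂ) (hc : 0 < c.re) :
    IntegrableOn (fun s : ℝ => Complex.exp (c * s)) (Set.Iic 0) := by
  have h := aux_integrableOn_cexp (-c) (by simpa using hc)
  rw [integrableOn_Iic_iff_integrableOn_Iio]
  have A : MeasurableEmbedding fun x : ℝ => -x :=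
    (Homeomorph.neg ℝ).isClosedEmbedding.measurableEmbedding
  rw [IntegrableOn, ← Measure.map_neg_eq_self (volume : Measure ℝ),
    Measure.restrict_map measurable_neg measurableSet_Ioi, A.integrable_map_iff] at h
  have : ((fun x : ℝ => -x) ⁻¹' Ioi 0) = Iio 0 := by ext x; simp
  rw [this] at h
  apply h.congr
  filter_upwards with s
  show Complex.exp (-c * ((-s : ℝ) : ℂ)) = _
  push_cast
  ring_nf

lemma aux_integral_cexp_Iic (c : ℂ) (hc : 0 < c.re) :
    ∫ s : ℝ in Set.Iic 0, Complex.exp (c * s) = c⁻¹ := by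
  have h := integral_comp_neg_Iic (0 : ℝ) (fun u : ℝ => Complex.exp (-c * u))
  have h2 : ∀ x : ℝ, Complex.exp (-c * (-x : ℝ)) = Complex.exp (c * x) := by
    intro x; push_cast; ring_nf
  simp only [h2, neg_zero] at h
  rw [h, aux_integral_cexp (-c) (by simpa using hc), neg_inv, neg_neg]

lemma aux_re_sub (a r : ℝ) : (Complex.I * r - a).re = -a := by
  simp [Complex.sub_re, Complex.mul_re]

lemma aux_re_add (a r : ℝ) : (Complex.I * r + a).re = a := by
  simp [Complex.add_re, Complex.mul_re]

lemma aux_eq_Ioi (a r : ℝ) : ∀ s ∈ Ioi (0:ℝ),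
    Complex.exp (Complex.I * s * r) * Real.exp (-a * |s|)
      = Complex.exp ((Complex.I * r - a) * s) := by
  intro s hs
  rw [abs_of_pos hs, Complex.ofReal_exp, ← Complex.exp_add]
  congr 1
  push_cast
  ring

lemma aux_eq_Iic (a r : ℝ) : ∀ s ∈ Iic (0:ℝ),
    Complex.exp (Complex.I * s * r) * Real.exp (-a * |s|)
      = Complex.exp ((Complex.I * r + a) * s) := by
  intro s hs
  rw [abs_of_nonpos hs, Complex.ofReal_exp, ← Complex.exp_add]
  congr 1
  push_cast
  ring

lemma aux_integrable_fourier (a r : ℝ) (ha : 0 < a) :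
    Integrable (fun s : ℝ => Complex.exp (Complex.I * s * r) * Real.exp (-a * |s|)) := by
  rw [← integrableOn_univ, ← Iic_union_Ioi (a := (0:ℝ))]
  apply IntegrableOn.union
  · exact (aux_integrableOn_cexp_Iic _ (by rw [aux_re_add]; exact ha)).congr_fun
      (fun s hs => (aux_eq_Iic a r s hs).symm) measurableSet_Iic
  · exact (aux_integrableOn_cexp _ (by rw [aux_re_sub]; linarith)).congr_fun
      (fun s hs => (aux_eq_Ioi a r s hs).symm) measurableSet_Ioi

lemma aux_integral_fourier (a r : ℝ) (ha : 0 < a) :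
    ∫ s : ℝ, Complex.exp (Complex.I * s * r) * Real.exp (-a * |s|)
      = 2 * a / (a ^ 2 + r ^ 2) := by
  have hIic : ∫ s : ℝ in Iic 0, Complex.exp (Complex.I * s * r) * Real.exp (-a * |s|)
      = (Complex.I * r + a)⁻¹ := by
    rw [setIntegral_congr_fun measurableSet_Iic (aux_eq_Iic a r)]
    exact aux_integral_cexp_Iic _ (by rw [aux_re_add]; exact ha)
  have hIoi : ∫ s : ℝ in Ioi 0, Complex.exp (Complex.I * s * r) * Real.exp (-a * |s|)
      = (a - Complex.I * r)⁻¹ := by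
    rw [setIntegral_congr_fun measurableSet_Ioi (aux_eq_Ioi a r)]
    rw [aux_integral_cexp _ (by rw [aux_re_sub]; linarith), ← inv_neg]
    ring_nf
  rw [← intervalIntegral.integral_Iic_add_Ioi
      ((aux_integrable_fourier a r ha).integrableOn)
      ((aux_integrable_fourier a r ha).integrableOn), hIic, hIoi]
  have h1 : (Complex.I * r + a) ≠ 0 := by
    intro h
    have := congrArg Complex.re h
    rw [aux_re_add] at this
    simp at this; linarith
  have h2 : (a - Complex.I * r : ℂ) ≠ 0 := by
    intro h
    have := congrArg Complex.re h
    simp [Complex.sub_re, Complex.mul_re] at this; linarith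
  have h3 : ((a:ℂ) ^ 2 + (r:ℂ) ^ 2) ≠ 0 := by
    have : ((a:ℂ)^2 + (r:ℂ)^2) = ((a^2+r^2 : ℝ) : ℂ) := by push_cast; ring
    rw [this]
    simp only [ne_eq, Complex.ofReal_eq_zero]
    positivity
  field_simp
  ring_nf
  rw [Complex.I_sq]
  ring

lemma aux_integrable_exp_abs (a : ℝ) (ha : 0 < a) :
    Integrable (fun s : ℝ => Real.exp (-a * |s|)) := by
  have h := aux_integrable_fourier a 0 ha
  simp only [Complex.ofReal_zero, mul_zero, Complex.exp_zero, one_mul] at h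
  refine h.re.congr ?_
  filter_upwards with s
  exact Complex.ofReal_re _

lemma aux_integral_exp_abs (a : ℝ) (ha : 0 < a) :
    ∫ s : ℝ, Real.exp (-a * |s|) = 2 / a := by
  have h := aux_integral_fourier a 0 ha
  simp only [Complex.ofReal_zero, mul_zero, Complex.exp_zero, one_mul] at h
  have ha' : (a : ℂ) ≠ 0 := by exact_mod_cast ha.ne'
  have h2 : ((2 * a / (a ^ 2 + 0 ^ 2) : ℂ)) = ((2 / a : ℝ) : ℂ) := by
    push_cast
    field_simp
    ring
  rw [h2] at h
  have h4 : ((∫ s : ℝ, Real.exp (-a * |s|) : ℝ) : ℂ) = ((2 / a : ℝ) : ℂ) := by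
    rw [← h]
    exact (integral_ofReal).symm
  exact_mod_cast h4

lemma aux_ofReal_integral (f : ℝ → ℝ) (μ : Measure ℝ) :
    ((∫ x, f x ∂μ : ℝ) : ℂ) = ∫ x, ((f x : ℝ) : ℂ) ∂μ := integral_ofReal.symm


/-- For every real `r` and every `β` with `0 < β ≤ 1`,
`1/√(r² + β²) = ∫_{-∞}^{∞} e^{isr} (∫_0^∞ (1/π)(1/√(1+x²)) e^{-β|s|√(1+x²)} dx) ds`. -/
theorem stmt_0 (r β : ℝ) (hβ : 0 < β) (hβ1 : β ≤ 1) :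
    ((1 / Real.sqrt (r ^ 2 + β ^ 2) : ℝ) : ℂ) =
      ∫ s : ℝ, Complex.exp (Complex.I * (s : ℂ) * (r : ℂ)) *
        ((∫ x in Set.Ioi (0 : ℝ),
            (1 / Real.pi) * (1 / Real.sqrt (1 + x ^ 2)) *
              Real.exp (-β * |s| * Real.sqrt (1 + x ^ 2)) : ℝ) : ℂ) := by
  have hπ : (0:ℝ) < π := Real.pi_pos
  have hsq : ∀ x : ℝ, (0:ℝ) < Real.sqrt (1 + x ^ 2) :=
    fun x => Real.sqrt_pos.mpr (by positivity)
  have hsqsq : ∀ x : ℝ, Real.sqrt (1 + x ^ 2) * Real.sqrt (1 + x ^ 2) = 1 + x ^ 2 :=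
    fun x => Real.mul_self_sqrt (by positivity)
  set g : ℝ → ℝ := fun x => 1 / π * (1 / Real.sqrt (1 + x ^ 2)) with hg
  set a : ℝ → ℝ := fun x => β * Real.sqrt (1 + x ^ 2) with ha
  have hax : ∀ x, 0 < a x := fun x => mul_pos hβ (hsq x)
  have hg0 : ∀ x, 0 < g x := fun x => by
    simp only [hg]; positivity
  set F : ℝ → ℝ → ℂ := fun s x =>
    Complex.exp (Complex.I * s * r) * ((g x * Real.exp (-(a x) * |s|) : ℝ) : ℂ) with hF
  -- Step 1 : rewrite the RHS integrand
  have step1 : ∀ s : ℝ, Complex.exp (Complex.I * (s : ℂ) * (r : ℂ)) *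
        ((∫ x in Set.Ioi (0 : ℝ),
            (1 / Real.pi) * (1 / Real.sqrt (1 + x ^ 2)) *
              Real.exp (-β * |s| * Real.sqrt (1 + x ^ 2)) : ℝ) : ℂ)
      = ∫ x in Set.Ioi (0:ℝ), F s x := by
    intro s
    rw [aux_ofReal_integral, ← integral_const_mul]
    apply setIntegral_congr_fun measurableSet_Ioi
    intro x _
    simp only [hF, hg, ha]
    congr 2
    push_cast
    rw [show -β * |s| * Real.sqrt (1 + x ^ 2) = -(β * Real.sqrt (1 + x ^ 2)) * |s| by ring]
  simp only [step1]
  -- Step 2 : integrability on the product space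
  have hFcont : Continuous fun p : ℝ × ℝ => F p.1 p.2 := by
    apply Continuous.mul
    · exact Complex.continuous_exp.comp (by fun_prop)
    · apply Complex.continuous_ofReal.comp
      apply Continuous.mul
      · apply Continuous.mul continuous_const
        apply Continuous.div continuous_const
        · fun_prop
        · exact fun x => (hsq x.2).ne'
      · apply Real.continuous_exp.comp
        apply Continuous.mul
        · apply Continuous.neg; fun_prop
        · fun_prop
  have hnormF : ∀ s x : ℝ, ‖F s x‖ = g x * Real.exp (-(a x) * |s|) := by
    intro s x
    simp only [hF]
    rw [norm_mul, Complex.norm_exp]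
    have h1 : (Complex.I * s * r).re = 0 := by simp [Complex.mul_re]
    rw [h1, Real.exp_zero, one_mul, Complex.norm_real, Real.norm_eq_abs,
      abs_of_nonneg (by positivity : (0:ℝ) ≤ g x * Real.exp (-(a x) * |s|))]
  have hIntS : ∀ x : ℝ, Integrable (fun s => F s x) := by
    intro x
    have : (fun s => F s x) = fun s : ℝ =>
        ((g x : ℝ) : ℂ) * (Complex.exp (Complex.I * s * r) * (Real.exp (-(a x) * |s|) : ℝ)) := by
      funext s; simp only [hF]; push_cast; ring
    rw [this]
    exact (aux_integrable_fourier (a x) r (hax x)).const_mul _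
  have hnormInt : ∀ x : ℝ, ∫ s : ℝ, ‖F s x‖ = 2 / (π * β) * (1 + x ^ 2)⁻¹ := by
    intro x
    simp only [hnormF]
    rw [integral_const_mul, aux_integral_exp_abs (a x) (hax x)]
    simp only [hg, ha]
    rw [show (1 + x ^ 2)⁻¹ = (Real.sqrt (1 + x ^ 2) * Real.sqrt (1 + x ^ 2))⁻¹ by rw [hsqsq]]
    field_simp
  have hProd : Integrable (Function.uncurry F)
      ((volume : Measure ℝ).prod ((volume : Measure ℝ).restrict (Set.Ioi 0))) := by
    rw [show Function.uncurry F = fun p : ℝ × ℝ => F p.1 p.2 from rfl,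
      MeasureTheory.integrable_prod_iff' hFcont.aestronglyMeasurable]
    constructor
    · filter_upwards with x using hIntS x
    · apply (Integrable.const_mul (integrable_inv_one_add_sq) (2 / (π * β))).integrableOn.congr
      filter_upwards with x
      exact (hnormInt x).symm
  -- Step 3 : swap the integrals
  rw [MeasureTheory.integral_integral_swap hProd]
  -- Step 4 : compute the inner integral
  have step4 : ∀ x : ℝ, ∫ s : ℝ, F s x
      = ((g x * (2 * a x / ((a x) ^ 2 + r ^ 2)) : ℝ) : ℂ) := by
    intro x
    have h1 : (fun s => F s x) = fun s : ℝ =>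
        ((g x : ℝ) : ℂ) * (Complex.exp (Complex.I * s * r) * (Real.exp (-(a x) * |s|) : ℝ)) := by
      funext s; simp only [hF]; push_cast; ring
    rw [h1, integral_const_mul, aux_integral_fourier (a x) r (hax x)]
    push_cast
    ring
  simp only [step4]
  rw [← aux_ofReal_integral]
  norm_cast
  -- Step 5 : compute the outer (real) integral
  have hpos : (0:ℝ) < r ^ 2 + β ^ 2 := by positivity
  set c : ℝ := Real.sqrt (r ^ 2 + β ^ 2) with hc
  have hc0 : 0 < c := Real.sqrt_pos.mpr hpos
  have hc2 : c ^ 2 = r ^ 2 + β ^ 2 := Real.sq_sqrt hpos.le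
  have hpt : ∀ x : ℝ, g x * (2 * a x / ((a x) ^ 2 + r ^ 2))
      = 2 * β / π * (c ^ 2 + (β * x) ^ 2)⁻¹ := by
    intro x
    simp only [hg, ha]
    rw [hc2]
    have h2 : (β * Real.sqrt (1 + x ^ 2)) ^ 2 = β ^ 2 + β ^ 2 * x ^ 2 := by
      rw [mul_pow, Real.sq_sqrt (by positivity : (0:ℝ) ≤ 1 + x ^ 2)]; ring
    rw [h2]
    have ht := (hsq x).ne'
    field_simp
    ring
  simp only [hpt]
  rw [integral_const_mul]
  have key1 : ∫ x in Set.Ioi (0:ℝ), (c ^ 2 + (β * x) ^ 2)⁻¹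
      = β⁻¹ * ∫ y in Set.Ioi (0:ℝ), (c ^ 2 + y ^ 2)⁻¹ := by
    have := integral_comp_mul_left_Ioi (fun y : ℝ => (c ^ 2 + y ^ 2)⁻¹) 0 hβ
    simp only [mul_zero] at this
    rw [this, smul_eq_mul]
  have key2 : ∫ y in Set.Ioi (0:ℝ), (c ^ 2 + y ^ 2)⁻¹
      = c⁻¹ * (π / 2) := by
    have h3 : ∀ y : ℝ, (c ^ 2 + y ^ 2)⁻¹ = (c ^ 2)⁻¹ * (1 + (c⁻¹ * y) ^ 2)⁻¹ := by
      intro y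
      rw [mul_pow, ← mul_inv, mul_add, mul_one]
      congr 2
      field_simp
    simp only [h3]
    rw [integral_const_mul]
    have := integral_comp_mul_left_Ioi (fun u : ℝ => (1 + u ^ 2)⁻¹) 0 (inv_pos.mpr hc0)
    simp only [mul_zero] at this
    rw [this, smul_eq_mul, integral_Ioi_inv_one_add_sq, Real.arctan_zero, sub_zero, inv_inv]
    field_simp
  rw [key1, key2, hc]
  field_simp
end

section
/- For every β with 0 < β ≤ 1 and every real s ≠ 0, ∫_0^∞ (1/π)(1/√(1+x²)) e^{-β|s|√(1+x²)} dx ≤ ⟨ln β⟩ e^{-β|s|} + 1_{|s|≤1} · ln(1/|s|), where ⟨x⟩ = √(1+x²); moreover the right-hand side, as a function of s, is integrable on ℝ. -/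
open MeasureTheory

private lemma sq_facts (x : ℝ) :
    0 < Real.sqrt (1 + x ^ 2) ∧ 1 ≤ Real.sqrt (1 + x ^ 2) ∧
      (0 ≤ x → x ≤ Real.sqrt (1 + x ^ 2)) := by
  have h0 : (0:ℝ) ≤ 1 + x ^ 2 := by positivity
  have hsq := Real.sq_sqrt h0
  have hnn := Real.sqrt_nonneg (1 + x ^ 2)
  refine ⟨Real.sqrt_pos.2 (by positivity), ?_, ?_⟩
  · nlinarith [sq_nonneg (Real.sqrt (1 + x ^ 2) - 1)]
  · intro hx
    nlinarith [sq_nonneg (Real.sqrt (1 + x ^ 2) - x)]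

private lemma key_bound (a : ℝ) (ha : 0 < a) :
    (∫ x in Set.Ioi (0 : ℝ),
        (1 / Real.pi) * (1 / Real.sqrt (1 + x ^ 2)) * Real.exp (-(a * Real.sqrt (1 + x ^ 2))))
      ≤ (1 / Real.pi) * Real.exp (-a) * (2 + Real.log (max 1 a⁻¹)) := by
  set g : ℝ → ℝ := fun x =>
    (1 / Real.pi) * (1 / Real.sqrt (1 + x ^ 2)) * Real.exp (-(a * Real.sqrt (1 + x ^ 2))) with hg
  set M : ℝ := max 1 a⁻¹ with hMdef
  have hM1 : (1:ℝ) ≤ M := le_max_left _ _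
  have hM0 : (0:ℝ) < M := lt_of_lt_of_le one_pos hM1
  have haM1 : (1:ℝ) ≤ a * M := by
    have h1 : a * a⁻¹ ≤ a * M := mul_le_mul_of_nonneg_left (le_max_right _ _) ha.le
    rwa [mul_inv_cancel₀ ha.ne'] at h1
  have haM : a ≤ a * M := le_mul_of_one_le_right ha.le hM1
  have hπ : (0:ℝ) < Real.pi := Real.pi_pos
  -- continuity of g
  have hcont : Continuous g := by
    have h1 : Continuous fun x : ℝ => Real.sqrt (1 + x ^ 2) :=
      (continuous_const.add (continuous_pow 2)).sqrt
    refine (continuous_const.mul ?_).mul (Real.continuous_exp.comp (continuous_const.mul h1).neg)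
    exact continuous_const.div h1 fun x => (sq_facts x).1.ne'
  -- integrability of g on Ioi 0
  have hgint : IntegrableOn g (Set.Ioi (0:ℝ)) := by
    have hdom : IntegrableOn (fun x : ℝ => (1 / Real.pi) * Real.exp (-a * x)) (Set.Ioi (0:ℝ)) :=
      (exp_neg_integrableOn_Ioi 0 ha).const_mul _
    refine hdom.mono' hcont.aestronglyMeasurable.restrict ?_
    refine (ae_restrict_iff' measurableSet_Ioi).2 (ae_of_all _ fun x hx => ?_)
    obtain ⟨hs0, hs1, hsx⟩ := sq_facts x
    have hxle := hsx (le_of_lt hx)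
    have h1 : ‖g x‖ = g x := by
      rw [Real.norm_eq_abs, abs_of_nonneg]
      positivity
    rw [h1, hg]
    have h2 : Real.exp (-(a * Real.sqrt (1 + x ^ 2))) ≤ Real.exp (-(a * x)) := by
      apply Real.exp_le_exp.2; nlinarith
    have h3 : 1 / Real.sqrt (1 + x ^ 2) ≤ 1 := by
      rw [div_le_one hs0]; exact hs1
    have := mul_le_mul h3 h2 (Real.exp_pos _).le one_pos.le
    calc (1 / Real.pi) * (1 / Real.sqrt (1 + x ^ 2)) * Real.exp (-(a * Real.sqrt (1 + x ^ 2)))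
        = (1 / Real.pi) * ((1 / Real.sqrt (1 + x ^ 2)) * Real.exp (-(a * Real.sqrt (1 + x ^ 2)))) := by
          ring
      _ ≤ (1 / Real.pi) * (1 * Real.exp (-(a * x))) := by
          apply mul_le_mul_of_nonneg_left this (by positivity)
      _ = (1 / Real.pi) * Real.exp (-a * x) := by rw [one_mul, neg_mul]
  -- splitting
  have hsplit1 : (∫ x in Set.Ioi (0:ℝ), g x)
      = (∫ x in Set.Ioc (0:ℝ) 1, g x) + ∫ x in Set.Ioi (1:ℝ), g x := by
    rw [← Set.Ioc_union_Ioi_eq_Ioi (zero_le_one (α := ℝ)),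
      setIntegral_union (Set.Ioc_disjoint_Ioi le_rfl) measurableSet_Ioi
        (hgint.mono_set (by rw [← Set.Ioc_union_Ioi_eq_Ioi (zero_le_one (α := ℝ))]; exact Set.subset_union_left))
        (hgint.mono_set (by rw [← Set.Ioc_union_Ioi_eq_Ioi (zero_le_one (α := ℝ))]; exact Set.subset_union_right))]
  have hsplit2 : (∫ x in Set.Ioi (1:ℝ), g x)
      = (∫ x in Set.Ioc (1:ℝ) M, g x) + ∫ x in Set.Ioi M, g x := by
    have hsub : Set.Ioi (1:ℝ) ⊆ Set.Ioi (0:ℝ) := Set.Ioi_subset_Ioi zero_le_one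
    rw [← Set.Ioc_union_Ioi_eq_Ioi hM1,
      setIntegral_union (Set.Ioc_disjoint_Ioi le_rfl) measurableSet_Ioi
        (hgint.mono_set (fun x hx => hsub ((Set.Ioc_union_Ioi_eq_Ioi hM1) ▸ (Set.subset_union_left hx))))
        (hgint.mono_set (fun x hx => hsub ((Set.Ioc_union_Ioi_eq_Ioi hM1) ▸ (Set.subset_union_right hx))))]
  -- piece 1
  have hP1 : (∫ x in Set.Ioc (0:ℝ) 1, g x) ≤ (1 / Real.pi) * Real.exp (-a) := by
    have hb : (∫ x in Set.Ioc (0:ℝ) 1, g x)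
        ≤ ∫ _x in Set.Ioc (0:ℝ) 1, (1 / Real.pi) * Real.exp (-a) := by
      refine setIntegral_mono_on (hgint.mono_set (Set.Ioc_subset_Ioi_self))
        (integrableOn_const (by simp [Real.volume_Ioc])) measurableSet_Ioc
        fun x hx => ?_
      obtain ⟨hs0, hs1, _⟩ := sq_facts x
      have h2 : Real.exp (-(a * Real.sqrt (1 + x ^ 2))) ≤ Real.exp (-a) := by
        apply Real.exp_le_exp.2; nlinarith
      have h3 : 1 / Real.sqrt (1 + x ^ 2) ≤ 1 := by rw [div_le_one hs0]; exact hs1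
      have := mul_le_mul h3 h2 (Real.exp_pos _).le one_pos.le
      calc g x = (1 / Real.pi) * ((1 / Real.sqrt (1 + x ^ 2)) *
            Real.exp (-(a * Real.sqrt (1 + x ^ 2)))) := by rw [hg]; ring
        _ ≤ (1 / Real.pi) * (1 * Real.exp (-a)) :=
            mul_le_mul_of_nonneg_left this (by positivity)
        _ = (1 / Real.pi) * Real.exp (-a) := by rw [one_mul]
    rw [setIntegral_const, Measure.real, Real.volume_Ioc] at hb
    simpa using hb
  -- piece 2
  have hP2 : (∫ x in Set.Ioc (1:ℝ) M, g x) ≤ (1 / Real.pi) * Real.exp (-a) * Real.log M := by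
    have hinv : IntegrableOn (fun x : ℝ => (1 / Real.pi) * Real.exp (-a) * x⁻¹)
        (Set.Ioc (1:ℝ) M) := by
      have h1 : IntervalIntegrable (fun x : ℝ => x⁻¹) volume 1 M := by
        apply intervalIntegral.intervalIntegrable_inv (f := fun x : ℝ => x)
        · intro x hx
          rcases hx with ⟨hx1, _⟩
          have : (1:ℝ) ≤ x := by simpa [min_eq_left hM1] using hx1
          linarith
        · exact continuousOn_id
      exact ((intervalIntegrable_iff_integrableOn_Ioc_of_le hM1).1 h1).const_mul _
    have hb : (∫ x in Set.Ioc (1:ℝ) M, g x)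
        ≤ ∫ x in Set.Ioc (1:ℝ) M, (1 / Real.pi) * Real.exp (-a) * x⁻¹ := by
      refine setIntegral_mono_on
        (hgint.mono_set (fun x hx => lt_trans one_pos hx.1))
        hinv measurableSet_Ioc fun x hx => ?_
      obtain ⟨hs0, hs1, hsx⟩ := sq_facts x
      have hx1 : (1:ℝ) < x := hx.1
      have hxle := hsx (by linarith)
      have h2 : Real.exp (-(a * Real.sqrt (1 + x ^ 2))) ≤ Real.exp (-a) := by
        apply Real.exp_le_exp.2; nlinarith
      have h3 : 1 / Real.sqrt (1 + x ^ 2) ≤ x⁻¹ := by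
        rw [one_div]
        exact inv_anti₀ (by linarith) hxle
      have := mul_le_mul h3 h2 (Real.exp_pos _).le (by positivity)
      calc g x = (1 / Real.pi) * ((1 / Real.sqrt (1 + x ^ 2)) *
            Real.exp (-(a * Real.sqrt (1 + x ^ 2)))) := by rw [hg]; ring
        _ ≤ (1 / Real.pi) * (x⁻¹ * Real.exp (-a)) :=
            mul_le_mul_of_nonneg_left this (by positivity)
        _ = (1 / Real.pi) * Real.exp (-a) * x⁻¹ := by ring
    have hval : (∫ x in Set.Ioc (1:ℝ) M, (1 / Real.pi) * Real.exp (-a) * x⁻¹)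
        = (1 / Real.pi) * Real.exp (-a) * Real.log M := by
      rw [← intervalIntegral.integral_of_le hM1, intervalIntegral.integral_const_mul,
        integral_inv_of_pos one_pos hM0, div_one]
    rw [hval] at hb
    exact hb
  -- piece 3
  have hP3 : (∫ x in Set.Ioi M, g x) ≤ (1 / Real.pi) * Real.exp (-a) := by
    have hdom : IntegrableOn (fun x : ℝ => (1 / Real.pi) * M⁻¹ * Real.exp (-(a * x)))
        (Set.Ioi M) := by
      simpa only [neg_mul, IntegrableOn] using (exp_neg_integrableOn_Ioi M ha).const_mul ((1 / Real.pi) * M⁻¹)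
    have hb : (∫ x in Set.Ioi M, g x)
        ≤ ∫ x in Set.Ioi M, (1 / Real.pi) * M⁻¹ * Real.exp (-(a * x)) := by
      refine setIntegral_mono_on
        (hgint.mono_set (fun x hx => lt_trans hM0 hx))
        hdom measurableSet_Ioi fun x hx => ?_
      obtain ⟨hs0, hs1, hsx⟩ := sq_facts x
      have hxM : M < x := hx
      have hxle := hsx (by linarith)
      have h2 : Real.exp (-(a * Real.sqrt (1 + x ^ 2))) ≤ Real.exp (-(a * x)) := by
        apply Real.exp_le_exp.2; nlinarith
      have h3 : 1 / Real.sqrt (1 + x ^ 2) ≤ M⁻¹ := by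
        rw [one_div]
        exact inv_anti₀ hM0 (by linarith)
      have := mul_le_mul h3 h2 (Real.exp_pos _).le (by positivity)
      calc g x = (1 / Real.pi) * ((1 / Real.sqrt (1 + x ^ 2)) *
            Real.exp (-(a * Real.sqrt (1 + x ^ 2)))) := by rw [hg]; ring
        _ ≤ (1 / Real.pi) * (M⁻¹ * Real.exp (-(a * x))) :=
            mul_le_mul_of_nonneg_left this (by positivity)
        _ = (1 / Real.pi) * M⁻¹ * Real.exp (-(a * x)) := by ring
    have hval : (∫ x in Set.Ioi M, (1 / Real.pi) * M⁻¹ * Real.exp (-(a * x)))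
        = (1 / Real.pi) * M⁻¹ * (a⁻¹ * Real.exp (-(a * M))) := by
      rw [MeasureTheory.integral_const_mul]
      congr 1
      have := integral_comp_mul_left_Ioi (fun y : ℝ => Real.exp (-y)) M ha
      rw [integral_exp_neg_Ioi] at this
      rw [this, smul_eq_mul]
    rw [hval] at hb
    refine le_trans hb ?_
    have hexp : Real.exp (-(a * M)) ≤ Real.exp (-a) := Real.exp_le_exp.2 (by linarith)
    have hMa : M⁻¹ * a⁻¹ ≤ 1 := by
      rw [← mul_inv]
      exact inv_le_one_of_one_le₀ (by nlinarith)
    have hexp0 : (0:ℝ) < Real.exp (-(a * M)) := Real.exp_pos _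
    calc (1 / Real.pi) * M⁻¹ * (a⁻¹ * Real.exp (-(a * M)))
        = (1 / Real.pi) * ((M⁻¹ * a⁻¹) * Real.exp (-(a * M))) := by ring
      _ ≤ (1 / Real.pi) * (1 * Real.exp (-a)) := by
          apply mul_le_mul_of_nonneg_left _ (by positivity)
          exact mul_le_mul hMa hexp hexp0.le one_pos.le
      _ = (1 / Real.pi) * Real.exp (-a) := by rw [one_mul]
  have hlogM : 0 ≤ Real.log M := Real.log_nonneg hM1
  calc (∫ x in Set.Ioi (0:ℝ), g x)
      = (∫ x in Set.Ioc (0:ℝ) 1, g x) + ((∫ x in Set.Ioc (1:ℝ) M, g x)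
          + ∫ x in Set.Ioi M, g x) := by rw [hsplit1, hsplit2]
    _ ≤ (1 / Real.pi) * Real.exp (-a) + ((1 / Real.pi) * Real.exp (-a) * Real.log M
          + (1 / Real.pi) * Real.exp (-a)) := by
        exact add_le_add hP1 (add_le_add hP2 hP3)
    _ = (1 / Real.pi) * Real.exp (-a) * (2 + Real.log M) := by ring

/-- For every `β` with `0 < β ≤ 1` and every real `s ≠ 0`,
`∫_0^∞ (1/π)(1/√(1+x²)) e^{-β|s|√(1+x²)} dx ≤ ⟨ln β⟩ e^{-β|s|} + 1_{|s|≤1} ln(1/|s|)`,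
where `⟨x⟩ = √(1+x²)`; moreover the right-hand side is integrable in `s` over `ℝ`. -/
theorem stmt_1 (β : ℝ) (hβ : 0 < β) (hβ1 : β ≤ 1) :
    (∀ s : ℝ, s ≠ 0 →
      (∫ x in Set.Ioi (0 : ℝ),
          (1 / Real.pi) * (1 / Real.sqrt (1 + x ^ 2)) *
            Real.exp (-β * |s| * Real.sqrt (1 + x ^ 2))) ≤
        Real.sqrt (1 + Real.log β ^ 2) * Real.exp (-β * |s|) +
          (if |s| ≤ 1 then Real.log (1 / |s|) else 0)) ∧
    Integrable (fun s : ℝ =>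
      Real.sqrt (1 + Real.log β ^ 2) * Real.exp (-β * |s|) +
        (if |s| ≤ 1 then Real.log (1 / |s|) else 0)) := by
  have hπ : (3:ℝ) < Real.pi := Real.pi_gt_three
  constructor
  · intro s hs0
    have habs : 0 < |s| := abs_pos.2 hs0
    have ha : 0 < β * |s| := mul_pos hβ habs
    have hkey := key_bound (β * |s|) ha
    have hlogβ : Real.log β ≤ 0 := Real.log_nonpos hβ.le hβ1
    -- rewrite integrand
    have hind : 0 ≤ (if |s| ≤ 1 then Real.log (1 / |s|) else 0) := by
      split_ifs with h
      · exact Real.log_nonneg ((one_le_div habs).2 h)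
      · exact le_rfl
    have hLB : Real.log (max 1 (β * |s|)⁻¹)
        ≤ -Real.log β + (if |s| ≤ 1 then Real.log (1 / |s|) else 0) := by
      rcases le_or_gt ((β * |s|)⁻¹) 1 with h | h
      · rw [max_eq_left h, Real.log_one]
        have : 0 ≤ -Real.log β := by linarith
        linarith
      · rw [max_eq_right h.le, mul_inv,
          Real.log_mul (by positivity) (by positivity), Real.log_inv β]
        split_ifs with hs1
        · rw [one_div]
        · have h1 : Real.log |s|⁻¹ ≤ 0 :=
            Real.log_nonpos (by positivity) (inv_le_one_of_one_le₀ (le_of_not_ge hs1))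
          linarith
    -- final comparison
    have hsq : 2 + -Real.log β ≤ Real.pi * Real.sqrt (1 + Real.log β ^ 2) := by
      have h1 : (2 + -Real.log β) / Real.pi ≤ Real.sqrt (1 + Real.log β ^ 2) := by
        apply Real.le_sqrt_of_sq_le
        rw [div_pow]
        rw [div_le_iff₀ (by positivity)]
        have hπ2 : (9:ℝ) < Real.pi ^ 2 := by nlinarith
        have hmul : (9:ℝ) * (1 + Real.log β ^ 2) ≤ Real.pi ^ 2 * (1 + Real.log β ^ 2) :=
          mul_le_mul_of_nonneg_right hπ2.le (by positivity)
        nlinarith [sq_nonneg (4 * Real.log β + 1)]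
      calc 2 + -Real.log β = Real.pi * ((2 + -Real.log β) / Real.pi) := by
            field_simp
        _ ≤ Real.pi * Real.sqrt (1 + Real.log β ^ 2) :=
            mul_le_mul_of_nonneg_left h1 (by positivity)
    have hexp1 : Real.exp (-(β * |s|)) ≤ 1 := by
      rw [Real.exp_le_one_iff]; linarith
    have hgoal :
        (∫ x in Set.Ioi (0 : ℝ),
            (1 / Real.pi) * (1 / Real.sqrt (1 + x ^ 2)) *
              Real.exp (-(β * |s| * Real.sqrt (1 + x ^ 2)))) ≤
          Real.sqrt (1 + Real.log β ^ 2) * Real.exp (-(β * |s|)) +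
            (if |s| ≤ 1 then Real.log (1 / |s|) else 0) := by
      refine le_trans hkey ?_
      set I := (if |s| ≤ 1 then Real.log (1 / |s|) else 0) with hI
      set E := Real.exp (-(β * |s|)) with hE
      have hE0 : 0 < E := Real.exp_pos _
      calc (1 / Real.pi) * E * (2 + Real.log (max 1 (β * |s|)⁻¹))
          ≤ (1 / Real.pi) * E * (2 + (-Real.log β + I)) := by
            apply mul_le_mul_of_nonneg_left _ (by positivity)
            linarith
        _ = E * ((2 + -Real.log β) / Real.pi) + ((1 / Real.pi) * E) * I := by ring
        _ ≤ E * Real.sqrt (1 + Real.log β ^ 2) + 1 * I := by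
            apply add_le_add
            · apply mul_le_mul_of_nonneg_left _ hE0.le
              rw [div_le_iff₀ (by positivity)]
              calc 2 + -Real.log β ≤ Real.pi * Real.sqrt (1 + Real.log β ^ 2) := hsq
                _ = Real.sqrt (1 + Real.log β ^ 2) * Real.pi := mul_comm _ _
            · apply mul_le_mul_of_nonneg_right _ hind
              have : (1:ℝ) / Real.pi ≤ 1 := by
                rw [div_le_one (by positivity)]; linarith
              nlinarith
        _ = Real.sqrt (1 + Real.log β ^ 2) * E + I := by ring
    simpa only [neg_mul] using hgoal
  · -- integrability
    have h_exp : Integrable (fun s : ℝ => Real.exp (-β * |s|)) := by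
      refine (integrable_inv_one_add_sq.const_mul (1 + 4 / β ^ 2)).mono'
        ((Real.continuous_exp.comp ((continuous_const.mul continuous_abs))).aestronglyMeasurable)
        (ae_of_all _ fun s => ?_)
      have ht : 0 ≤ |s| := abs_nonneg s
      have h1 : 1 + β * |s| / 2 ≤ Real.exp (β * |s| / 2) := by
        have := Real.add_one_le_exp (β * |s| / 2)
        linarith
      have h2 : Real.exp (β * |s| / 2) * Real.exp (β * |s| / 2) = Real.exp (β * |s|) := by
        rw [← Real.exp_add]; ring_nf
      have h3 : Real.exp (-β * |s|) * Real.exp (β * |s|) = 1 := by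
        rw [← Real.exp_add]; ring_nf; exact Real.exp_zero
      have hu0 : 0 < Real.exp (-β * |s|) := Real.exp_pos _
      have hE0 : 0 < Real.exp (β * |s| / 2) := Real.exp_pos _
      have hUE : Real.exp (-β * |s|) *
          (Real.exp (β * |s| / 2) * Real.exp (β * |s| / 2)) = 1 := by
        rw [h2]; exact h3
      have hE2 : (β * |s| / 2) * (β * |s| / 2)
          ≤ Real.exp (β * |s| / 2) * Real.exp (β * |s| / 2) := by
        apply mul_self_le_mul_self (by positivity)
        nlinarith
      have hEge1 : (1:ℝ) ≤ Real.exp (β * |s| / 2) * Real.exp (β * |s| / 2) := by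
        nlinarith [sq_nonneg (Real.exp (β * |s| / 2) - 1), mul_nonneg hβ.le ht]
      have h4 : Real.exp (-β * |s|) * ((β * |s| / 2) * (β * |s| / 2)) ≤ 1 := by
        calc Real.exp (-β * |s|) * ((β * |s| / 2) * (β * |s| / 2))
            ≤ Real.exp (-β * |s|) *
              (Real.exp (β * |s| / 2) * Real.exp (β * |s| / 2)) :=
              mul_le_mul_of_nonneg_left hE2 hu0.le
          _ = 1 := hUE
      have hu1 : Real.exp (-β * |s|) ≤ 1 := by
        have h5 := mul_le_mul_of_nonneg_left hEge1 hu0.le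
        rw [hUE, mul_one] at h5
        exact h5
      have key : Real.exp (-β * |s|) * (1 + |s| ^ 2) * β ^ 2 ≤ β ^ 2 + 4 := by
        nlinarith [h4, hu1, sq_nonneg |s|, sq_nonneg β]
      have hnorm : ‖Real.exp (-β * |s|)‖ = Real.exp (-β * |s|) :=
        Real.norm_of_nonneg hu0.le
      rw [hnorm]
      have hden : (0:ℝ) < 1 + s ^ 2 := by positivity
      have hfin : Real.exp (-β * |s|) * (1 + s ^ 2) ≤ 1 + 4 / β ^ 2 := by
        have h6 : (1:ℝ) + 4 / β ^ 2 = (β ^ 2 + 4) / β ^ 2 := by field_simp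
        rw [h6, le_div_iff₀ (by positivity)]
        calc Real.exp (-β * |s|) * (1 + s ^ 2) * β ^ 2
            = Real.exp (-β * |s|) * (1 + |s| ^ 2) * β ^ 2 := by rw [sq_abs]
          _ ≤ β ^ 2 + 4 := key
      calc Real.exp (-β * |s|)
          = Real.exp (-β * |s|) * (1 + s ^ 2) / (1 + s ^ 2) := by field_simp
        _ ≤ (1 + 4 / β ^ 2) / (1 + s ^ 2) := by
            gcongr
        _ = (1 + 4 / β ^ 2) * (1 + s ^ 2)⁻¹ := div_eq_mul_inv _ _
    have h_f1 : Integrable (fun s : ℝ =>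
        Real.sqrt (1 + Real.log β ^ 2) * Real.exp (-β * |s|)) :=
      h_exp.const_mul _
    have h_log : IntegrableOn (fun s : ℝ => Real.log (1 / |s|)) (Set.Icc (-1:ℝ) 1) := by
      have hpos : IntegrableOn (fun s : ℝ => Real.log (1 / |s|)) (Set.Ioc (0:ℝ) 1) := by
        have hdom : IntegrableOn (fun x : ℝ => 2 * x ^ (-(1/2) : ℝ)) (Set.Ioc (0:ℝ) 1) :=
          ((intervalIntegrable_iff_integrableOn_Ioc_of_le zero_le_one).1
            (intervalIntegral.intervalIntegrable_rpow' (by norm_num))).const_mul 2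
        refine hdom.mono' ?_ ?_
        · exact ((Real.measurable_log.comp
            (measurable_const.div continuous_abs.measurable)).aestronglyMeasurable).restrict
        · refine (ae_restrict_iff' measurableSet_Ioc).2 (ae_of_all _ fun x hx => ?_)
          obtain ⟨hx0, hx1⟩ := hx
          have habs : |x| = x := abs_of_pos hx0
          have hinv : (1:ℝ) ≤ 1 / x := (one_le_div hx0).2 hx1
          have hlog0 : 0 ≤ Real.log (1 / x) := Real.log_nonneg hinv
          rw [habs, Real.norm_of_nonneg hlog0]
          have hrw : (1 / x : ℝ) = ((1/x) ^ ((1:ℝ)/2)) ^ (2:ℕ) := by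
            rw [← Real.rpow_natCast ((1/x) ^ ((1:ℝ)/2)) 2, ← Real.rpow_mul (by positivity)]
            norm_num
          have hlog : Real.log (1 / x) = 2 * Real.log ((1/x) ^ ((1:ℝ)/2)) := by
            rw [Real.log_rpow (by positivity)]; ring
          have hle : Real.log ((1/x) ^ ((1:ℝ)/2)) ≤ (1/x) ^ ((1:ℝ)/2) := by
            have h := Real.log_le_sub_one_of_pos
              (show (0:ℝ) < (1/x) ^ ((1:ℝ)/2) by positivity)
            linarith
          have heq : ((1:ℝ)/x) ^ ((1:ℝ)/2) = x ^ (-(1/2) : ℝ) := by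
            rw [one_div, ← Real.rpow_neg_one x, ← Real.rpow_mul hx0.le]
            norm_num
          calc Real.log (1 / x) = 2 * Real.log ((1/x) ^ ((1:ℝ)/2)) := hlog
            _ ≤ 2 * ((1/x) ^ ((1:ℝ)/2)) := by linarith
            _ = 2 * x ^ (-(1/2) : ℝ) := by rw [heq]
      have hB : IntervalIntegrable (fun s : ℝ => Real.log (1 / |s|)) volume 0 1 :=
        (intervalIntegrable_iff_integrableOn_Ioc_of_le zero_le_one).2 hpos
      have hC : IntervalIntegrable (fun s : ℝ => Real.log (1 / |s|)) volume (-1) 0 := by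
        rw [IntervalIntegrable.iff_comp_neg]
        simpa only [abs_neg, neg_neg, neg_zero] using hB.symm
      have hD : IntervalIntegrable (fun s : ℝ => Real.log (1 / |s|)) volume (-1) 1 :=
        hC.trans hB
      exact (integrableOn_Icc_iff_integrableOn_Ioc (by simp)).2
        ((intervalIntegrable_iff_integrableOn_Ioc_of_le (by norm_num)).1 hD)
    have h_f2 : Integrable (fun s : ℝ => if |s| ≤ 1 then Real.log (1 / |s|) else 0) := by
      have heq : (fun s : ℝ => if |s| ≤ 1 then Real.log (1 / |s|) else 0)
          = Set.indicator (Set.Icc (-1:ℝ) 1) (fun s => Real.log (1 / |s|)) := by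
        funext s
        rw [Set.indicator_apply]
        simp only [Set.mem_Icc, ← abs_le]
      rw [heq]
      exact (integrable_indicator_iff measurableSet_Icc).2 h_log
    exact h_f1.add h_f2
end

section
/- Let ν be a probability measure on ℝ supported in [-ξ̄, ξ̄] with mean zero and variance one, and let C_n denote its n-th cumulant. Then C_1 = 0, C_2 = 1, and for all n > 2 one has |C_n| ≤ 3 ξ̄^n n!. -/
open MeasureTheory

/-- The moment generating function `g_m(z) = ∫ e^{ixz} ν(dx)`. -/
noncomputable def momentGen (ν : Measure ℝ) (z : ℂ) : ℂ :=
  ∫ x, Complex.exp (Complex.I * (x : ℂ) * z) ∂ν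

/-- The cumulant generating function `g_c = log g_m`. -/
noncomputable def cumulantGen (ν : Measure ℝ) (z : ℂ) : ℂ :=
  Complex.log (momentGen ν z)

/-- The `n`-th cumulant `C_n = (-i)^n g_c^{(n)}(0)`. -/
noncomputable def cumulant (ν : Measure ℝ) (n : ℕ) : ℂ :=
  (-Complex.I) ^ n * iteratedDeriv n (cumulantGen ν) 0

section Aux

open Metric Complex

lemma aux_cauchy {f : ℂ → ℂ} {R : NNReal} {M : ℝ} (hR : 0 < R)
    (hd : DifferentiableOn ℂ f (closedBall (0:ℂ) R))
    (hM : ∀ z ∈ closedBall (0:ℂ) R, ‖f z‖ ≤ M) (n : ℕ) :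
    ‖iteratedDeriv n f 0‖ ≤ n.factorial * M / (R:ℝ) ^ n := by
  have h := hd.hasFPowerSeriesOnBall hR
  have h1 : iteratedDeriv n f 0 =
      n.factorial • (cauchyPowerSeries f 0 R n fun _ => (1:ℂ)) := by
    rw [iteratedDeriv_eq_iteratedFDeriv, ← h.factorial_smul (1:ℂ) n]
  have hMnn : 0 ≤ M := le_trans (norm_nonneg _) (hM 0 (by simp [hR.le]))
  have h2 : ‖cauchyPowerSeries f 0 R n fun _ => (1:ℂ)‖ ≤ M / (R:ℝ) ^ n := by
    have h3 := (cauchyPowerSeries f 0 R n).le_opNorm fun _ => (1:ℂ)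
    simp only [norm_one, Finset.prod_const, one_pow, mul_one] at h3
    refine h3.trans ?_
    refine (norm_cauchyPowerSeries_le f 0 R n).trans ?_
    have hint : IntervalIntegrable (fun θ : ℝ => ‖f (circleMap 0 R θ)‖) volume 0 (2*Real.pi) := by
      apply ContinuousOn.intervalIntegrable
      apply (hd.continuousOn.comp (continuous_circleMap 0 R).continuousOn ?_).norm
      intro θ _
      simpa using circleMap_mem_closedBall (0:ℂ) R.coe_nonneg θ
    have h4 : ∫ θ : ℝ in (0)..2*Real.pi, ‖f (circleMap 0 R θ)‖ ≤ 2 * Real.pi * M := by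
      calc ∫ θ : ℝ in (0)..2*Real.pi, ‖f (circleMap 0 R θ)‖
          ≤ ∫ _ : ℝ in (0)..2*Real.pi, M := by
            apply intervalIntegral.integral_mono_on Real.two_pi_pos.le hint
              intervalIntegrable_const
            intro θ _
            exact hM _ (by simpa using circleMap_mem_closedBall (0:ℂ) R.coe_nonneg θ)
        _ = 2 * Real.pi * M := by simp [mul_comm]
    have hRpos : (0:ℝ) < R := hR
    rw [_root_.abs_of_nonneg R.coe_nonneg, div_eq_mul_inv, ← inv_pow]
    refine mul_le_mul_of_nonneg_right ?_ (by positivity)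
    calc (2*Real.pi)⁻¹ * ∫ θ : ℝ in (0)..2*Real.pi, ‖f (circleMap 0 R θ)‖
        ≤ (2*Real.pi)⁻¹ * (2*Real.pi*M) :=
          mul_le_mul_of_nonneg_left h4 (by positivity)
      _ = M := by field_simp
  rw [h1, nsmul_eq_mul, norm_mul]
  simp only [norm_natCast]
  rw [div_eq_mul_inv, mul_assoc, ← div_eq_mul_inv]
  exact mul_le_mul_of_nonneg_left h2 (Nat.cast_nonneg _)

lemma aux_bound {ξbar : ℝ} {x : ℝ} (hx : x ∈ Set.Icc (-ξbar) ξbar) (k : ℕ) {z : ℂ} {C : ℝ}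
    (hC : ‖z‖ ≤ C) :
    ‖(Complex.I * x)^k * Complex.exp (Complex.I * x * z)‖ ≤ ξbar^k * Real.exp (ξbar * C) := by
  have hxb : |x| ≤ ξbar := abs_le.mpr ⟨hx.1, hx.2⟩
  have hξ : 0 ≤ ξbar := le_trans (abs_nonneg x) hxb
  have hCnn : 0 ≤ C := le_trans (norm_nonneg z) hC
  have h1 : ‖(Complex.I * x : ℂ)‖ = |x| := by
    rw [norm_mul, Complex.norm_I, one_mul, Complex.norm_real, Real.norm_eq_abs]
  rw [norm_mul, norm_pow, h1, Complex.norm_exp]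
  have h2 : (Complex.I * x * z).re ≤ ξbar * C := by
    have : (Complex.I * x * z).re = -(x * z.im) := by
      simp [Complex.mul_re, Complex.mul_im]
    rw [this]
    calc -(x * z.im) ≤ |x * z.im| := neg_le_abs _
      _ = |x| * |z.im| := abs_mul _ _
      _ ≤ ξbar * C := by
          apply mul_le_mul hxb ((Complex.abs_im_le_norm z).trans hC) (abs_nonneg _) hξ
  exact mul_le_mul (pow_le_pow_left₀ (abs_nonneg _) hxb k)
    (Real.exp_le_exp.mpr h2) (Real.exp_pos _).le (by positivity)

lemma aux_integrable (ν : Measure ℝ) [IsProbabilityMeasure ν] {ξbar : ℝ}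
    (hsupp : ∀ᵐ x ∂ν, x ∈ Set.Icc (-ξbar) ξbar) (k : ℕ) (z : ℂ) :
    Integrable (fun x : ℝ => (Complex.I * x)^k * Complex.exp (Complex.I * x * z)) ν := by
  have hc : Continuous fun x : ℝ => (Complex.I * x)^k * Complex.exp (Complex.I * x * z) := by
    fun_prop
  refine (integrable_const (ξbar^k * Real.exp (ξbar * ‖z‖))).mono' hc.aestronglyMeasurable ?_
  filter_upwards [hsupp] with x hx
  exact aux_bound hx k le_rfl

lemma aux_hasDerivAt (ν : Measure ℝ) [IsProbabilityMeasure ν] {ξbar : ℝ}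
    (hsupp : ∀ᵐ x ∂ν, x ∈ Set.Icc (-ξbar) ξbar) (k : ℕ) (z₀ : ℂ) :
    HasDerivAt (fun z => ∫ x, (Complex.I * x)^k * Complex.exp (Complex.I * x * z) ∂ν)
      (∫ x, (Complex.I * x)^(k+1) * Complex.exp (Complex.I * x * z₀) ∂ν) z₀ := by
  have hξ : 0 ≤ ξbar := by
    obtain ⟨x, hx⟩ := hsupp.exists
    exact le_trans (abs_nonneg x) (abs_le.mpr ⟨hx.1, hx.2⟩)
  refine (hasDerivAt_integral_of_dominated_loc_of_deriv_le (𝕜 := ℂ)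
    (F := fun z (x : ℝ) => (Complex.I * x)^k * Complex.exp (Complex.I * x * z))
    (F' := fun z (x : ℝ) => (Complex.I * x)^(k+1) * Complex.exp (Complex.I * x * z)) (s := Metric.ball z₀ 1)
    (Metric.ball_mem_nhds z₀ one_pos)
    (Filter.Eventually.of_forall fun z => ?_) (aux_integrable ν hsupp k z₀)
    ?_ (bound := fun _ => ξbar^(k+1) * Real.exp (ξbar * (‖z₀‖ + 1))) ?_ (integrable_const _) ?_).2
  · exact (by fun_prop :
      Continuous fun x : ℝ => (Complex.I * x)^k * Complex.exp (Complex.I * x * z)).aestronglyMeasurable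
  · exact (by fun_prop :
      Continuous fun x : ℝ => (Complex.I * x)^(k+1) * Complex.exp (Complex.I * x * z₀)).aestronglyMeasurable
  · filter_upwards [hsupp] with x hx z hz
    refine aux_bound hx (k+1) ?_
    have := mem_ball_iff_norm.mp hz
    calc ‖z‖ ≤ ‖z - z₀‖ + ‖z₀‖ := by simpa using norm_add_le (z - z₀) z₀
      _ ≤ ‖z₀‖ + 1 := by linarith
  · filter_upwards with x z _
    have h1 : HasDerivAt (fun z : ℂ => Complex.I * x * z) (Complex.I * x) z := by
      simpa using (hasDerivAt_id z).const_mul (Complex.I * x)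
    have h3 := h1.cexp.const_mul ((Complex.I * x)^k)
    rw [show (Complex.I * x)^(k+1) * Complex.exp (Complex.I * x * z)
      = (Complex.I * x)^k * (Complex.exp (Complex.I * x * z) * (Complex.I * x)) by ring]
    exact h3

lemma aux_re {w : ℂ} (h : ‖w - 1‖ ≤ 3/4) : (1:ℝ)/4 ≤ w.re := by
  have h1 : |(w - 1).re| ≤ 3/4 := le_trans (Complex.abs_re_le_norm _) h
  have h2 : (w - 1).re = w.re - 1 := by simp
  rw [h2, abs_le] at h1
  linarith [h1.1]

lemma aux_log_bound {w : ℂ} (h : ‖w - 1‖ ≤ 3/4) : ‖Complex.log w‖ ≤ 3 := by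
  have hre := aux_re h
  have hlo : (1:ℝ)/4 ≤ ‖w‖ := le_trans hre (Complex.re_le_norm w)
  have hhi : ‖w‖ ≤ 7/4 := by
    calc ‖w‖ = ‖w - 1 + 1‖ := by ring_nf
      _ ≤ ‖w - 1‖ + ‖(1:ℂ)‖ := norm_add_le _ _
      _ ≤ 7/4 := by rw [norm_one]; linarith
  have h3 : ‖Complex.log w‖ ≤ |Real.log ‖w‖| + |Complex.arg w| := by
    refine (Complex.norm_le_abs_re_add_abs_im _).trans ?_
    rw [Complex.log_re, Complex.log_im]
  have harg : |Complex.arg w| ≤ Real.pi / 2 :=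
    Complex.abs_arg_le_pi_div_two_iff.mpr (by linarith)
  have hlog : |Real.log ‖w‖| ≤ Real.log 4 := by
    rw [abs_le]
    constructor
    · have h5 : Real.log (4:ℝ)⁻¹ ≤ Real.log ‖w‖ :=
        Real.log_le_log (by norm_num) (by linarith)
      rwa [Real.log_inv] at h5
    · exact (Real.log_le_log (by linarith) hhi).trans
        (Real.log_le_log (by norm_num) (by norm_num))
  have hl4 : Real.log 4 < 1.3862943616 := by
    have h6 : (4:ℝ) = 2^2 := by norm_num
    rw [h6, Real.log_pow]
    have := Real.log_two_lt_d9
    push_cast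
    linarith
  have hpi := Real.pi_lt_d2
  linarith

lemma aux_slit {w : ℂ} (h : ‖w - 1‖ ≤ 3/4) : w ∈ Complex.slitPlane :=
  Complex.mem_slitPlane_iff.mpr (Or.inl (by linarith [aux_re h]))

lemma momentGen_zero (ν : Measure ℝ) [IsProbabilityMeasure ν] : momentGen ν 0 = 1 := by
  simp [momentGen]

lemma aux_intx (ν : Measure ℝ) [IsProbabilityMeasure ν] {ξbar : ℝ}
    (hsupp : ∀ᵐ x ∂ν, x ∈ Set.Icc (-ξbar) ξbar) :
    Integrable (fun a : ℝ => ((a : ℂ))) ν := by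
  refine (integrable_const ξbar).mono' Complex.continuous_ofReal.aestronglyMeasurable ?_
  filter_upwards [hsupp] with x hx
  simpa [Complex.norm_real, Real.norm_eq_abs] using abs_le.mpr ⟨hx.1, hx.2⟩

lemma aux_intlin (ν : Measure ℝ) [IsProbabilityMeasure ν] {ξbar : ℝ}
    (hsupp : ∀ᵐ x ∂ν, x ∈ Set.Icc (-ξbar) ξbar) (z : ℂ) :
    Integrable (fun a : ℝ => Complex.I * a * z) ν := by
  have h2 : (fun a : ℝ => Complex.I * a * z) = fun a : ℝ => (Complex.I * z) * a := by
    funext a; ring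
  rw [h2]
  exact (aux_intx ν hsupp).const_mul _

lemma aux_intlin_zero (ν : Measure ℝ) [IsProbabilityMeasure ν]
    (hmean : ∫ x, x ∂ν = 0) (z : ℂ) :
    ∫ a : ℝ, Complex.I * a * z ∂ν = 0 := by
  have h2 : (fun a : ℝ => Complex.I * a * z) = fun a : ℝ => (Complex.I * z) * a := by
    funext a; ring
  have h3 : ∫ a : ℝ, (a:ℂ) ∂ν = ((∫ a : ℝ, a ∂ν : ℝ) : ℂ) := integral_ofReal
  rw [h2, integral_const_mul, h3, hmean]
  simp

/-- Key bound : `‖g_m(z) - 1‖ ≤ 3/4` on the closed ball of radius `ξbar⁻¹`. -/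
lemma aux_key (ν : Measure ℝ) [IsProbabilityMeasure ν] {ξbar : ℝ} (hξ : 0 < ξbar)
    (hsupp : ∀ᵐ x ∂ν, x ∈ Set.Icc (-ξbar) ξbar)
    (hmean : ∫ x, x ∂ν = 0) {z : ℂ} (hz : ‖z‖ ≤ ξbar⁻¹) :
    ‖momentGen ν z - 1‖ ≤ 3/4 := by
  have hexp : Integrable (fun a : ℝ => Complex.exp (Complex.I * a * z)) ν := by
    simpa using aux_integrable ν hsupp 0 z
  have hlin := aux_intlin ν hsupp z
  have h1 : Integrable (fun a : ℝ => (1:ℂ) + Complex.I * a * z) ν :=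
    (integrable_const 1).add hlin
  have heq : momentGen ν z - 1 =
      ∫ a : ℝ, (Complex.exp (Complex.I * a * z) - (1 + Complex.I * a * z)) ∂ν := by
    rw [integral_sub hexp h1, momentGen, integral_add (integrable_const _) hlin,
      aux_intlin_zero ν hmean z]
    simp
  rw [heq]
  have hb : ∀ᵐ (a : ℝ) ∂ν, ‖Complex.exp (Complex.I * a * z) - (1 + Complex.I * a * z)‖ ≤ 3/4 := by
    filter_upwards [hsupp] with x hx
    have hxb : |x| ≤ ξbar := abs_le.mpr ⟨hx.1, hx.2⟩
    have habs : ‖Complex.I * x * z‖ ≤ 1 := by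
      rw [norm_mul, norm_mul, Complex.norm_I, one_mul, Complex.norm_real, Real.norm_eq_abs]
      calc |x| * ‖z‖ ≤ ξbar * ξbar⁻¹ :=
        mul_le_mul hxb hz (norm_nonneg _) hξ.le
        _ = 1 := mul_inv_cancel₀ hξ.ne'
    have := Complex.exp_bound habs (by norm_num : 0 < 2)
    have hsum : ∑ m ∈ Finset.range 2, (Complex.I * x * z) ^ m / m.factorial
        = 1 + Complex.I * x * z := by
      simp [Finset.sum_range_succ]
    rw [hsum] at this
    refine this.trans ?_
    have h1 : ‖Complex.I * x * z‖ ^ 2 ≤ 1 :=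
      pow_le_one₀ (norm_nonneg _) habs
    have h2 : ‖Complex.I * ↑x * z‖ ^ 2
          * (((2:ℕ).succ : ℝ) * (((2:ℕ).factorial : ℝ) * ((2:ℕ) : ℝ))⁻¹)
        ≤ 1 * (((2:ℕ).succ : ℝ) * (((2:ℕ).factorial : ℝ) * ((2:ℕ) : ℝ))⁻¹) :=
      mul_le_mul_of_nonneg_right h1 (by positivity)
    refine h2.trans ?_
    norm_num [Nat.factorial]
  calc ‖∫ a : ℝ, (Complex.exp (Complex.I * a * z) - (1 + Complex.I * a * z)) ∂ν‖
      ≤ ∫ _ : ℝ, (3/4 : ℝ) ∂ν := norm_integral_le_of_norm_le (integrable_const _) hb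
    _ = 3/4 := by simp

end Aux

/-- If `ν` is a probability measure on `ℝ` supported in `[-ξ̄, ξ̄]` with mean zero and
variance one, then `C₁ = 0`, `C₂ = 1`, and `|C_n| ≤ 3 ξ̄^n n!` for all `n > 2`. -/
theorem stmt_2 (ν : Measure ℝ) [IsProbabilityMeasure ν] (ξbar : ℝ) (hξ : 0 < ξbar)
    (hsupp : ∀ᵐ x ∂ν, x ∈ Set.Icc (-ξbar) ξbar)
    (hmean : ∫ x, x ∂ν = 0) (hvar : ∫ x, x ^ 2 ∂ν = 1) :
    cumulant ν 1 = 0 ∧ cumulant ν 2 = 1 ∧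
      ∀ n : ℕ, 2 < n → ‖cumulant ν n‖ ≤ 3 * ξbar ^ n * n.factorial := by
  classical
  -- the first derivative function
  set M1 : ℂ → ℂ := fun z => ∫ x, Complex.I * x * Complex.exp (Complex.I * x * z) ∂ν with hM1
  have hM1eq : (fun z : ℂ => ∫ x, (Complex.I * x)^1 * Complex.exp (Complex.I * x * z) ∂ν) = M1 := by
    funext z; simp [hM1]
  have hmgD : ∀ z : ℂ, HasDerivAt (momentGen ν) (M1 z) z := by
    intro z
    have h := aux_hasDerivAt ν hsupp 0 z
    simp only [zero_add, pow_zero, one_mul, pow_one] at h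
    exact h
  have hM1D : HasDerivAt M1 (∫ x, (Complex.I * x)^2 * Complex.exp (Complex.I * x * (0:ℂ)) ∂ν) 0 := by
    have h := aux_hasDerivAt ν hsupp 1 0
    rwa [hM1eq] at h
  have hM1_zero : M1 0 = 0 := by
    have h := aux_intlin_zero ν hmean 1
    simp only [hM1, mul_zero, Complex.exp_zero, mul_one]
    simpa using h
  have hM2_zero : (∫ x, (Complex.I * x)^2 * Complex.exp (Complex.I * x * (0:ℂ)) ∂ν) = -1 := by
    simp only [mul_zero, Complex.exp_zero, mul_one]
    have h1 : (fun x : ℝ => (Complex.I * x)^2) = fun x : ℝ => -(((x^2 : ℝ) : ℂ)) := by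
      funext x
      rw [mul_pow, Complex.I_sq]
      push_cast
      ring
    rw [h1, integral_neg]
    have h3 : ∫ a : ℝ, ((a^2 : ℝ):ℂ) ∂ν = ((∫ a : ℝ, a^2 ∂ν : ℝ) : ℂ) := integral_ofReal
    rw [h3, hvar]
    simp
  have hmg0 : momentGen ν 0 = 1 := momentGen_zero ν
  have hslit0 : momentGen ν 0 ∈ Complex.slitPlane := by
    rw [hmg0]; exact Complex.one_mem_slitPlane
  -- C1
  have hc1 : HasDerivAt (cumulantGen ν) 0 0 := by
    have h := (hmgD 0).clog hslit0
    rw [hM1_zero, hmg0] at h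
    simpa [show cumulantGen ν = fun t => Complex.log (momentGen ν t) from rfl] using h
  have hC1 : cumulant ν 1 = 0 := by
    rw [cumulant, iteratedDeriv_one, hc1.deriv]
    simp
  -- slit plane membership on the closed ball
  have hslit : ∀ z : ℂ, ‖z‖ ≤ ξbar⁻¹ → momentGen ν z ∈ Complex.slitPlane := fun z hz =>
    aux_slit (aux_key ν hξ hsupp hmean hz)
  -- C2
  have hRpos : (0:ℝ) < ξbar⁻¹ := inv_pos.mpr hξ
  have hder_eq : ∀ z ∈ Metric.ball (0:ℂ) ξbar⁻¹,
      deriv (cumulantGen ν) z = M1 z / momentGen ν z := by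
    intro z hz
    have hz' : ‖z‖ ≤ ξbar⁻¹ := by
      have := Metric.mem_ball.mp hz
      simp only [dist_zero_right] at this
      exact this.le
    have h := (hmgD z).clog (hslit z hz')
    have : HasDerivAt (cumulantGen ν) (M1 z / momentGen ν z) z := by
      simpa [show cumulantGen ν = fun t => Complex.log (momentGen ν t) from rfl] using h
    exact this.deriv
  have hev : deriv (cumulantGen ν) =ᶠ[nhds (0:ℂ)] fun z => M1 z / momentGen ν z := by
    filter_upwards [Metric.isOpen_ball.mem_nhds (Metric.mem_ball_self hRpos)] with z hz
    exact hder_eq z hz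
  have hdiv : HasDerivAt (fun z => M1 z / momentGen ν z) (-1) 0 := by
    have h := hM1D.div (hmgD 0) (by rw [hmg0]; norm_num)
    rw [hM2_zero, hM1_zero, hmg0] at h
    exact (by simpa using h : HasDerivAt (M1 / momentGen ν) (-1) 0)
  have hC2 : cumulant ν 2 = 1 := by
    have h2 : iteratedDeriv 2 (cumulantGen ν) 0 = -1 := by
      rw [iteratedDeriv_succ, iteratedDeriv_one, hev.deriv_eq, hdiv.deriv]
    rw [cumulant, h2]
    simp [pow_two]
  refine ⟨hC1, hC2, ?_⟩
  -- the tail bound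
  intro n hn
  set Rnn : NNReal := ⟨ξbar⁻¹, hRpos.le⟩ with hRnn
  have hRnn_pos : 0 < Rnn := by
    rw [← NNReal.coe_lt_coe]
    exact hRpos
  have hcoe : (Rnn : ℝ) = ξbar⁻¹ := rfl
  have hd : DifferentiableOn ℂ (cumulantGen ν) (Metric.closedBall (0:ℂ) Rnn) := by
    intro z hz
    have hz' : ‖z‖ ≤ ξbar⁻¹ := by
      have := Metric.mem_closedBall.mp hz
      simpa [hcoe, dist_zero_right] using this
    have h := (hmgD z).clog (hslit z hz')
    exact (show HasDerivAt (cumulantGen ν) _ z by simpa [show cumulantGen ν = fun t => Complex.log (momentGen ν t) from rfl] using h).differentiableAt.differentiableWithinAt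
  have hM : ∀ z ∈ Metric.closedBall (0:ℂ) (Rnn:ℝ), ‖cumulantGen ν z‖ ≤ 3 := by
    intro z hz
    have hz' : ‖z‖ ≤ ξbar⁻¹ := by
      have := Metric.mem_closedBall.mp hz
      simpa [hcoe, dist_zero_right] using this
    exact aux_log_bound (aux_key ν hξ hsupp hmean hz')
  have hb := aux_cauchy hRnn_pos hd hM n
  have habs : ‖cumulant ν n‖ = ‖iteratedDeriv n (cumulantGen ν) 0‖ := by
    rw [cumulant, norm_mul, norm_pow, norm_neg, Complex.norm_I,
      one_pow, one_mul]
  rw [habs]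
  refine hb.trans ?_
  rw [hcoe, inv_pow, div_eq_mul_inv, inv_inv]
  exact le_of_eq (by ring)
end

section
/- Let I be a finite index set with |I| = N, let 2 ≤ M < N be an integer, set a = 2ξ̄(3ξ̄² + 1), and assume |C_2| = 1, C_1 = 0, and |C_n| ≤ 3 ξ̄^n n! for n > 2. Then for any 0 ≤ r ≤ 1/a, Σ over all partitions S of I containing at least one block of size > M of r^{N - 2|S|} ∏_{A∈S} |C_{|A|}| is at most N! (ar)^{M - σ}, where σ = 1 if N − M is odd and σ = 0 otherwise. -/
open scoped Classical

/-- `S` is a partition of `Fin N`: its blocks are nonempty, pairwise disjoint,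
and cover everything. -/
def IsPartitionOf {N : ℕ} (S : Finset (Finset (Fin N))) : Prop :=
  (∀ A ∈ S, A.Nonempty) ∧ (∀ A ∈ S, ∀ B ∈ S, A ≠ B → Disjoint A B) ∧
    S.biUnion id = Finset.univ

open scoped Classical
open Finset

noncomputable def pOf {α : Type*} [DecidableEq α] [Fintype α] (s : Finset α) : Finset (Finset (Finset α)) :=
  Finset.univ.filter fun S => (∀ A ∈ S, A.Nonempty) ∧
    (∀ A ∈ S, ∀ B ∈ S, A ≠ B → Disjoint A B) ∧ S.biUnion id = s

lemma mem_pOf {α : Type*} [DecidableEq α] [Fintype α] {s : Finset α} {S : Finset (Finset α)} :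
    S ∈ pOf s ↔ (∀ A ∈ S, A.Nonempty) ∧
      (∀ A ∈ S, ∀ B ∈ S, A ≠ B → Disjoint A B) ∧ S.biUnion id = s := by
  simp [pOf]


lemma pOf_empty {α : Type*} [DecidableEq α] [Fintype α] : pOf (∅ : Finset α) = {∅} := by
  ext S
  simp only [mem_pOf, mem_singleton]
  constructor
  · rintro ⟨hne, -, hcov⟩
    by_contra hS
    obtain ⟨A, hA⟩ := Finset.nonempty_iff_ne_empty.mpr hS
    obtain ⟨y, hy⟩ := hne A hA
    have : y ∈ S.biUnion id := mem_biUnion.mpr ⟨A, hA, hy⟩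
    rw [hcov] at this
    exact absurd this (notMem_empty y)
  · rintro rfl
    refine ⟨by simp, by simp, by simp⟩

lemma not_mem_pOf_block {α : Type*} [DecidableEq α] [Fintype α] {s : Finset α} {A : Finset α} {x : α}
    (hxA : x ∈ A) {S' : Finset (Finset α)} (hS' : S' ∈ pOf (s \ A)) : A ∉ S' := by
  obtain ⟨-, -, hcov⟩ := mem_pOf.mp hS'
  intro hA
  have : A ⊆ s \ A := hcov ▸ subset_biUnion_of_mem id hA
  exact absurd (this hxA) (by simp [hxA])

lemma insert_mem_pOf {α : Type*} [DecidableEq α] [Fintype α] {s : Finset α} {A : Finset α} {x : α}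
    (hxA : x ∈ A) (hAs : A ⊆ s) {S' : Finset (Finset α)} (hS' : S' ∈ pOf (s \ A)) :
    insert A S' ∈ pOf s := by
  obtain ⟨hne, hdis, hcov⟩ := mem_pOf.mp hS'
  have hsub : ∀ B ∈ S', B ⊆ s \ A := fun B hB => hcov ▸ subset_biUnion_of_mem id hB
  refine mem_pOf.mpr ⟨?_, ?_, ?_⟩
  · intro B hB
    rcases mem_insert.mp hB with rfl | hB
    · exact ⟨x, hxA⟩
    · exact hne B hB
  · intro B hB B' hB' hBB'
    rcases mem_insert.mp hB with rfl | hB2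
    · rcases mem_insert.mp hB' with rfl | hB2'
      · exact absurd rfl hBB'
      · exact disjoint_sdiff.mono_right (hsub B' hB2')
    · rcases mem_insert.mp hB' with rfl | hB2'
      · exact (disjoint_sdiff.mono_right (hsub B hB2)).symm
      · exact hdis B hB2 B' hB2' hBB'
  · rw [biUnion_insert, hcov]
    simpa using hAs

lemma pOf_eq_biUnion {α : Type*} [DecidableEq α] [Fintype α] {s : Finset α} {x : α} (hx : x ∈ s) :
    pOf s = (s.powerset.filter (fun A => x ∈ A)).biUnion
      (fun A => (pOf (s \ A)).image (insert A)) := by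
  ext S
  simp only [mem_biUnion, mem_filter, mem_powerset, mem_image]
  constructor
  · intro hS
    obtain ⟨hne, hdis, hcov⟩ := mem_pOf.mp hS
    have hx' : x ∈ S.biUnion id := by rw [hcov]; exact hx
    obtain ⟨A, hAS, hxA⟩ := mem_biUnion.mp hx'
    have hsubS : ∀ B ∈ S, B ⊆ s := fun B hB => hcov ▸ subset_biUnion_of_mem id hB
    refine ⟨A, ⟨hsubS A hAS, hxA⟩, S.erase A, ?_, ?_⟩
    · refine mem_pOf.mpr ⟨fun B hB => hne B (mem_of_mem_erase hB), ?_, ?_⟩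
      · intro B hB B' hB' hBB'
        exact hdis B (mem_of_mem_erase hB) B' (mem_of_mem_erase hB') hBB'
      · apply Finset.Subset.antisymm
        · intro y hy
          obtain ⟨B, hB, hyB⟩ := mem_biUnion.mp hy
          have hBA : B ≠ A := ne_of_mem_erase hB
          refine mem_sdiff.mpr ⟨hsubS B (mem_of_mem_erase hB) hyB, fun hyA => ?_⟩
          exact Finset.disjoint_left.mp (hdis B (mem_of_mem_erase hB) A hAS hBA) hyB hyA
        · intro y hy
          obtain ⟨hys, hyA⟩ := mem_sdiff.mp hy
          have : y ∈ S.biUnion id := by rw [hcov]; exact hys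
          obtain ⟨B, hB, hyB⟩ := mem_biUnion.mp this
          exact mem_biUnion.mpr ⟨B, mem_erase.mpr ⟨fun h => hyA (h ▸ hyB), hB⟩, hyB⟩
    · exact insert_erase hAS
  · rintro ⟨A, ⟨hAs, hxA⟩, S', hS', rfl⟩
    exact insert_mem_pOf hxA hAs hS'

lemma sum_pOf_rec {α : Type*} [DecidableEq α] [Fintype α] (v : ℕ → ℝ) {s : Finset α} {x : α} (hx : x ∈ s) :
    ∑ S ∈ pOf s, ∏ A ∈ S, v A.card =
      ∑ A ∈ s.powerset.filter (fun A => x ∈ A),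
        v A.card * ∑ S' ∈ pOf (s \ A), ∏ B ∈ S', v B.card := by
  have hdisj : ((s.powerset.filter (fun A => x ∈ A)) : Set (Finset α)).PairwiseDisjoint
      (fun A => (pOf (s \ A)).image (insert A)) := by
    intro A hA A' hA' hAA'
    simp only [coe_filter, Set.mem_setOf_eq, mem_powerset] at hA hA'
    simp only [Function.onFun]
    rw [Finset.disjoint_left]
    intro S hSA hSA'
    obtain ⟨S₁, hS₁, rfl⟩ := mem_image.mp hSA
    obtain ⟨S₂, hS₂, hEq⟩ := mem_image.mp hSA'
    have hmem : insert A S₁ ∈ pOf s := insert_mem_pOf hA.2 hA.1 hS₁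
    obtain ⟨-, hdis, -⟩ := mem_pOf.mp hmem
    have hA'mem : A' ∈ insert A S₁ := by rw [← hEq]; exact mem_insert_self A' S₂
    exact Finset.disjoint_left.mp
      (hdis A (mem_insert_self A S₁) A' hA'mem (fun h => hAA' h)) hA.2 hA'.2
  rw [pOf_eq_biUnion hx, sum_biUnion hdisj]
  refine Finset.sum_congr rfl fun A hA => ?_
  obtain ⟨hAs, hxA⟩ := mem_filter.mp hA
  rw [mem_powerset] at hAs
  rw [Finset.sum_image (fun S₁ h₁ S₂ h₂ hEq => by
    have h₁' : A ∉ S₁ := not_mem_pOf_block hxA h₁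
    have h₂' : A ∉ S₂ := not_mem_pOf_block hxA h₂
    rw [← Finset.erase_insert h₁', hEq, Finset.erase_insert h₂']), Finset.mul_sum]
  refine Finset.sum_congr rfl fun S' hS' => ?_
  rw [Finset.prod_insert (not_mem_pOf_block hxA hS')]

noncomputable def bseq : ℕ → ℝ := fun j =>
  if j = 0 then 0 else if j = 1 then 1 else ((j : ℝ) + 1) * 2 * (1/2)^j

lemma bseq_sum_le (c : ℕ) (hc : 2 ≤ c) :
    ∑ j ∈ range c, bseq j ≤ 5 - ((c : ℝ) + 2) * 4 * (1/2)^c := by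
  induction c, hc using Nat.le_induction with
  | base => simp [Finset.sum_range_succ, bseq]; norm_num
  | succ c hc ih =>
    rw [Finset.sum_range_succ]
    have hb : bseq c = ((c : ℝ) + 1) * 2 * (1/2)^c := by
      simp only [bseq, if_neg (by omega : c ≠ 0), if_neg (by omega : c ≠ 1)]
    rw [hb]
    have : ((1:ℝ)/2)^(c+1) = (1/2)^c * (1/2) := by ring
    push_cast
    rw [this]
    linarith
lemma bseq_sum_le' (c : ℕ) : ∑ j ∈ range c, bseq j ≤ c := by
  match c, Nat.lt_or_ge c 2 with
  | 0, _ => simp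
  | 1, _ => simp [bseq]
  | (n+2), _ =>
    have h2 : 2 ≤ n + 2 := by omega
    refine le_trans (bseq_sum_le _ h2) ?_
    set c := n + 2
    rcases le_or_gt 5 c with h5 | h5
    · have h1 : (0:ℝ) ≤ ((c : ℝ) + 2) * 4 * (1/2)^c := by positivity
      have : (5:ℝ) ≤ (c:ℝ) := by exact_mod_cast h5
      linarith
    · interval_cases c <;> norm_num

lemma arith_sum (v : ℕ → ℝ) (h1 : v 1 = 0) (h2 : v 2 ≤ 1)
    (h3 : ∀ n, 3 ≤ n → v n ≤ n.factorial * 4 * (1/2)^n) (c : ℕ) :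
    ∑ j ∈ range c, v (j+1) / (j.factorial : ℝ) ≤ c := by
  refine le_trans (Finset.sum_le_sum (fun j _ => ?_)) (bseq_sum_le' c)
  match j with
  | 0 => simp [h1, bseq]
  | 1 => simpa [bseq] using h2
  | (m+2) =>
    have hj3 : 3 ≤ m + 3 := by omega
    have hv := h3 (m+3) hj3
    have hfac : (0:ℝ) < ((m+2).factorial : ℝ) := by positivity
    rw [div_le_iff₀ hfac]
    simp only [bseq, if_neg (by omega : m + 2 ≠ 0), if_neg (by omega : m + 2 ≠ 1)]
    have hfach : ((m+3).factorial : ℝ) = ((m:ℝ)+3) * ((m+2).factorial : ℝ) := by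
      rw [show m + 3 = (m+2) + 1 from rfl, Nat.factorial_succ]
      push_cast; ring
    calc v (m + 2 + 1) ≤ ((m+3).factorial : ℝ) * 4 * (1/2)^(m+3) := by
          convert hv using 3 <;> omega
      _ = (((m:ℝ)+2) + 1) * 2 * (1/2)^(m+2) * ((m+2).factorial : ℝ) := by
          rw [hfach, show m+3 = (m+2)+1 from rfl, pow_succ]; push_cast; ring
      _ = ((↑(m+2) : ℝ) + 1) * 2 * (1/2)^(m+2) * ((m+2).factorial : ℝ) := by push_cast; ring

lemma T_le {α : Type*} [DecidableEq α] [Fintype α] (v : ℕ → ℝ)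
    (h0 : ∀ n, 0 ≤ v n) (h1 : v 1 = 0) (h2 : v 2 ≤ 1)
    (h3 : ∀ n, 3 ≤ n → v n ≤ n.factorial * 4 * (1/2)^n) :
    ∀ s : Finset α, (∑ S ∈ pOf s, ∏ A ∈ S, v A.card) ≤ s.card.factorial := by
  intro s
  induction s using Finset.strongInduction with
  | _ s ih =>
  rcases s.eq_empty_or_nonempty with rfl | ⟨x, hx⟩
  · rw [pOf_empty]; simp
  set c := s.card with hc
  have hc1 : 1 ≤ c := Finset.card_pos.mpr ⟨x, hx⟩
  rw [sum_pOf_rec v hx]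
  have step1 : ∑ A ∈ s.powerset.filter (fun A => x ∈ A),
      v A.card * ∑ S' ∈ pOf (s \ A), ∏ B ∈ S', v B.card ≤
      ∑ A ∈ s.powerset.filter (fun A => x ∈ A),
      v A.card * ((c - A.card).factorial : ℝ) := by
    refine Finset.sum_le_sum fun A hA => ?_
    obtain ⟨hAs, hxA⟩ := Finset.mem_filter.mp hA
    rw [Finset.mem_powerset] at hAs
    have hss : s \ A ⊂ s := Finset.sdiff_ssubset hAs ⟨x, hxA⟩
    have := ih (s \ A) hss
    rw [Finset.card_sdiff_of_subset hAs] at this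
    exact mul_le_mul_of_nonneg_left this (h0 _)
  refine le_trans step1 ?_
  -- reindex by erasing x
  have step2 : ∑ A ∈ s.powerset.filter (fun A => x ∈ A),
      v A.card * ((c - A.card).factorial : ℝ) =
      ∑ B ∈ (s.erase x).powerset, v (B.card + 1) * ((c - 1 - B.card).factorial : ℝ) := by
    refine Finset.sum_nbij' (fun A => A.erase x) (fun B => insert x B) ?_ ?_ ?_ ?_ ?_
    · intro A hA
      obtain ⟨hAs, hxA⟩ := Finset.mem_filter.mp hA
      rw [Finset.mem_powerset] at hAs
      exact Finset.mem_powerset.mpr (Finset.erase_subset_erase x hAs)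
    · intro B hB
      rw [Finset.mem_powerset] at hB
      refine Finset.mem_filter.mpr ⟨Finset.mem_powerset.mpr ?_, Finset.mem_insert_self x B⟩
      exact Finset.insert_subset hx (hB.trans (Finset.erase_subset x s))
    · intro A hA
      obtain ⟨-, hxA⟩ := Finset.mem_filter.mp hA
      exact Finset.insert_erase hxA
    · intro B hB
      rw [Finset.mem_powerset] at hB
      exact Finset.erase_insert (fun hxB => (Finset.notMem_erase x s) (hB hxB))
    · intro A hA
      obtain ⟨hAs, hxA⟩ := Finset.mem_filter.mp hA
      have hcard : A.card = (A.erase x).card + 1 := by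
        rw [Finset.card_erase_of_mem hxA]
        have : 1 ≤ A.card := Finset.card_pos.mpr ⟨x, hxA⟩
        omega
      have heq : c - ((A.erase x).card + 1) = c - 1 - (A.erase x).card := by omega
      simp only [hcard, heq]
  rw [step2, Finset.sum_powerset]
  have hcerase : (s.erase x).card = c - 1 := by rw [Finset.card_erase_of_mem hx]
  rw [hcerase]
  have step3 : ∀ j ∈ range ((c-1)+1),
      ∑ B ∈ Finset.powersetCard j (s.erase x), v (B.card + 1) * ((c - 1 - B.card).factorial : ℝ)
      = ((c-1).choose j : ℝ) * (v (j + 1) * ((c - 1 - j).factorial : ℝ)) := by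
    intro j hj
    rw [Finset.sum_congr rfl (fun B hB => by
      rw [(Finset.mem_powersetCard.mp hB).2]), Finset.sum_const,
      Finset.card_powersetCard, hcerase, nsmul_eq_mul]
  rw [Finset.sum_congr rfl step3]
  -- final numeric bound
  have key : ∀ j ∈ range ((c-1)+1),
      ((c-1).choose j : ℝ) * (v (j + 1) * ((c - 1 - j).factorial : ℝ)) =
        ((c-1).factorial : ℝ) * (v (j+1) / (j.factorial : ℝ)) := by
    intro j hj
    have hjle : j ≤ c - 1 := by simpa using Nat.lt_succ_iff.mp (Finset.mem_range.mp hj)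
    have := Nat.choose_mul_factorial_mul_factorial hjle
    have hfac : ((c-1).choose j : ℝ) * (j.factorial : ℝ) * ((c-1-j).factorial : ℝ)
        = ((c-1).factorial : ℝ) := by exact_mod_cast congrArg (Nat.cast (R := ℝ)) this
    have hj0 : (0:ℝ) < (j.factorial : ℝ) := by positivity
    rw [← hfac]
    field_simp
  rw [Finset.sum_congr rfl key, ← Finset.mul_sum,
    show (c-1)+1 = c from by omega]
  have harith := arith_sum v h1 h2 h3 ((c-1)+1)
  have : ((c-1)+1 : ℕ) = c := by omega
  rw [this] at harith
  calc ((c-1).factorial : ℝ) * (∑ j ∈ range c, v (j+1) / (j.factorial : ℝ))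
      ≤ ((c-1).factorial : ℝ) * c := by
        exact mul_le_mul_of_nonneg_left harith (by positivity)
    _ = (c.factorial : ℝ) := by
        rw [show c = (c-1)+1 by omega, Nat.factorial_succ]
        push_cast; ring

/-- Bound on the sum over all partitions containing a block of size `> M`:
with `a = 2ξ̄(3ξ̄²+1)` and `0 ≤ r ≤ 1/a`,
`Σ_S r^{N-2|S|} ∏_{A∈S} |C_{|A|}| ≤ N! (ar)^{M-σ}`, where `σ = 1` iff `N − M` is odd. -/
theorem stmt_4 (N M : ℕ) (hM2 : 2 ≤ M) (hMN : M < N) (ξbar : ℝ) (hξ : 0 < ξbar)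
    (C : ℕ → ℝ) (hC1 : C 1 = 0) (hC2 : C 2 = 1)
    (hCn : ∀ n, 2 < n → |C n| ≤ 3 * ξbar ^ n * n.factorial)
    (r : ℝ) (hr0 : 0 ≤ r) (hr : r ≤ 1 / (2 * ξbar * (3 * ξbar ^ 2 + 1))) :
    ∑ S ∈ Finset.univ.filter (fun S : Finset (Finset (Fin N)) =>
        IsPartitionOf S ∧ ∃ A ∈ S, M < A.card),
      (r ^ ((N : ℤ) - 2 * S.card) * ∏ A ∈ S, |C A.card|) ≤
      (N.factorial : ℝ) *
        (2 * ξbar * (3 * ξbar ^ 2 + 1) * r) ^ (M - if (N - M) % 2 = 1 then 1 else 0) := by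
  set a : ℝ := 2 * ξbar * (3 * ξbar ^ 2 + 1) with ha
  have hapos : 0 < a := by positivity
  have har0 : 0 ≤ a * r := by positivity
  have har1 : a * r ≤ 1 := by
    have := mul_le_mul_of_nonneg_left hr hapos.le
    calc a * r ≤ a * (1 / a) := this
      _ = 1 := by field_simp
  set σ : ℕ := if (N - M) % 2 = 1 then 1 else 0 with hσ
  set v : ℕ → ℝ := fun n => |C n| / a ^ (n - 2) with hv
  have hv0 : ∀ n, 0 ≤ v n := fun n => by
    simp only [hv]; positivity
  have hv1 : v 1 = 0 := by simp [hv, hC1]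
  have hv2 : v 2 ≤ 1 := by simp [hv, hC2]
  have hv3 : ∀ n, 3 ≤ n → v n ≤ n.factorial * 4 * (1/2)^n := by
    intro n hn
    obtain ⟨k, rfl⟩ : ∃ k, n = k + 3 := ⟨n - 3, by omega⟩
    have hCb := hCn (k+3) (by omega)
    have hF : (0:ℝ) ≤ ((k+3).factorial : ℝ) := by positivity
    have ht1 : (1:ℝ) ≤ 3 * ξbar ^ 2 + 1 := by nlinarith [sq_nonneg ξbar]
    have h1 : 3 * ξbar^2 ≤ (3 * ξbar ^ 2 + 1) ^ (k+1) :=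
      le_trans (by linarith) (le_self_pow₀ ht1 (by omega))
    have hpow : a ^ (k+1) = 2^(k+1) * ξbar^(k+1) * (3 * ξbar ^ 2 + 1)^(k+1) := by
      rw [ha, mul_pow, mul_pow]
    have h2ne : (2:ℝ)^(k+1) ≠ 0 := by positivity
    have key2 : 3 * ξbar ^ (k+3) * ((k+3).factorial : ℝ) ≤
        ((k+3).factorial : ℝ) * 4 * (1/2)^(k+3) * a ^ (k+1) := by
      have h2 := mul_le_mul_of_nonneg_left h1
        (mul_nonneg hF (pow_nonneg hξ.le (k+1)))
      calc 3 * ξbar ^ (k+3) * ((k+3).factorial : ℝ)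
          = ((k+3).factorial : ℝ) * ξbar^(k+1) * (3 * ξbar^2) := by ring
        _ ≤ ((k+3).factorial : ℝ) * ξbar^(k+1) * (3*ξbar^2+1)^(k+1) := h2
        _ = ((k+3).factorial : ℝ) * 4 * (1/2)^(k+3) * a^(k+1) := by
            rw [hpow]
            have h12 : ((1:ℝ)/2)^(k+3) = ((2:ℝ)^(k+1))⁻¹ * (1/4) := by
              rw [show k+3 = (k+1)+2 from rfl, pow_add, one_div, inv_pow]
              norm_num
            rw [h12]
            field_simp
    show |C (k+3)| / a ^ ((k+3) - 2) ≤ _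
    rw [show (k+3) - 2 = k+1 from rfl, div_le_iff₀ (by positivity)]
    calc |C (k+3)| ≤ 3 * ξbar^(k+3) * ((k+3).factorial : ℝ) := hCb
      _ ≤ _ := key2
  clear_value a σ v
  have key : ∀ S ∈ Finset.univ.filter (fun S : Finset (Finset (Fin N)) =>
        IsPartitionOf S ∧ ∃ A ∈ S, M < A.card),
      r ^ ((N : ℤ) - 2 * S.card) * ∏ A ∈ S, |C A.card| ≤
        (a*r)^(M-σ) * ∏ A ∈ S, v A.card := by
    intro S hS
    have hRHS0 : 0 ≤ (a*r)^(M-σ) * ∏ A ∈ S, v A.card :=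
      mul_nonneg (pow_nonneg har0 _) (Finset.prod_nonneg fun A _ => hv0 _)
    obtain ⟨hpart, A₀, hA₀S, hA₀card⟩ := (Finset.mem_filter.mp hS).2
    obtain ⟨hne, hdisj, hcover⟩ := hpart
    by_cases hsing : ∃ A ∈ S, A.card = 1
    · obtain ⟨A₁, hA₁, hA₁c⟩ := hsing
      have hz : ∏ A ∈ S, |C A.card| = 0 :=
        Finset.prod_eq_zero hA₁ (by rw [hA₁c, hC1, abs_zero])
      rw [hz, mul_zero]
      exact hRHS0
    · have h2le : ∀ A ∈ S, 2 ≤ A.card := by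
        intro A hA
        have h1 : 1 ≤ A.card := Finset.card_pos.mpr (hne A hA)
        have : A.card ≠ 1 := fun h => hsing ⟨A, hA, h⟩
        omega
      have hsumcard : ∑ A ∈ S, A.card = N := by
        have := Finset.card_biUnion (s := S) (t := id) hdisj
        rw [hcover, Finset.card_univ, Fintype.card_fin] at this
        exact this.symm
      set k : ℕ := ∑ A ∈ S, (A.card - 2) with hkdef
      have hk : k + 2 * S.card = N := by
        have hc : ∀ A ∈ S, (A.card - 2) + 2 = A.card :=
          fun A hA => Nat.sub_add_cancel (h2le A hA)
        calc k + 2 * S.card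
            = ∑ A ∈ S, ((A.card - 2) + 2) := by
              rw [Finset.sum_add_distrib, Finset.sum_const, smul_eq_mul]; ring
          _ = ∑ A ∈ S, A.card := Finset.sum_congr rfl hc
          _ = N := hsumcard
      have hzpow : r ^ ((N : ℤ) - 2 * S.card) = r ^ k := by
        rw [show (N : ℤ) - 2 * S.card = (k : ℤ) by omega, zpow_natCast]
      have hprodC : ∏ A ∈ S, |C A.card| = (∏ A ∈ S, v A.card) * a ^ k := by
        have hcc : ∀ A ∈ S, |C A.card| = v A.card * a ^ (A.card - 2) := by
          intro A hA
          simp only [hv]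
          field_simp
        calc ∏ A ∈ S, |C A.card|
            = ∏ A ∈ S, (v A.card * a ^ (A.card - 2)) := Finset.prod_congr rfl hcc
          _ = (∏ A ∈ S, v A.card) * ∏ A ∈ S, a ^ (A.card - 2) :=
              Finset.prod_mul_distrib
          _ = (∏ A ∈ S, v A.card) * a ^ k := by
              rw [Finset.prod_pow_eq_pow_sum]
      have hbig : A₀.card - 2 ≤ k :=
        Finset.single_le_sum (f := fun A => A.card - 2) (fun i _ => Nat.zero_le _) hA₀S
      have hMk : M - σ ≤ k := by
        simp only [hσ]
        split_ifs <;> omega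
      rw [hzpow, hprodC]
      calc r ^ k * ((∏ A ∈ S, v A.card) * a ^ k)
          = (a*r)^k * ∏ A ∈ S, v A.card := by rw [mul_pow]; ring
        _ ≤ (a*r)^(M-σ) * ∏ A ∈ S, v A.card :=
            mul_le_mul_of_nonneg_right (pow_le_pow_of_le_one har0 har1 hMk)
              (Finset.prod_nonneg fun A _ => hv0 _)
  have hPsub : Finset.univ.filter (fun S : Finset (Finset (Fin N)) =>
      IsPartitionOf S ∧ ∃ A ∈ S, M < A.card) ⊆ pOf (Finset.univ : Finset (Fin N)) := by
    intro S hS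
    obtain ⟨h1', h2', h3'⟩ := (Finset.mem_filter.mp hS).2.1
    exact mem_pOf.mpr ⟨h1', h2', h3'⟩
  calc ∑ S ∈ Finset.univ.filter (fun S : Finset (Finset (Fin N)) =>
        IsPartitionOf S ∧ ∃ A ∈ S, M < A.card),
      (r ^ ((N : ℤ) - 2 * S.card) * ∏ A ∈ S, |C A.card|)
      ≤ ∑ S ∈ Finset.univ.filter (fun S : Finset (Finset (Fin N)) =>
          IsPartitionOf S ∧ ∃ A ∈ S, M < A.card),
        (a*r)^(M-σ) * ∏ A ∈ S, v A.card := Finset.sum_le_sum key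
    _ = (a*r)^(M-σ) * ∑ S ∈ Finset.univ.filter (fun S : Finset (Finset (Fin N)) =>
          IsPartitionOf S ∧ ∃ A ∈ S, M < A.card), ∏ A ∈ S, v A.card := by
        rw [← Finset.mul_sum]
    _ ≤ (a*r)^(M-σ) * ∑ S ∈ pOf (Finset.univ : Finset (Fin N)), ∏ A ∈ S, v A.card :=
        mul_le_mul_of_nonneg_left
          (Finset.sum_le_sum_of_subset_of_nonneg hPsub
            (fun S _ _ => Finset.prod_nonneg fun A _ => hv0 _))
          (pow_nonneg har0 _)
    _ ≤ (a*r)^(M-σ) * ((Finset.univ : Finset (Fin N)).card.factorial : ℝ) :=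
        mul_le_mul_of_nonneg_left (T_le v hv0 hv1 hv2 hv3 Finset.univ)
          (pow_nonneg har0 _)
    _ = (N.factorial : ℝ) * (a*r)^(M-σ) := by
        rw [Finset.card_univ, Fintype.card_fin]; ring
end
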